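/- arXiv:1507.05316 — 7 statements merged into one kernel-verified Lean document; each statement's English description precedes it below -/
import Mathlib

section
/- Let f be a Boolean function with n variables with f ≠ 0 (so also μₙ(f) ≠ 0). Then deg(f) + deg(μₙ(f)) ≥ n. -/
/-- Möbius transform of a Boolean function with n variables:
`μₙ(f)(u) = ⊕_{v ≼ u} f(v)` where `≼` is componentwise. -/
def mobius {n : ℕ} (f : (Fin n → ZMod 2) → ZMod 2) : (Fin n → ZMod 2) → ZMod 2 :=
  fun u => ∑ v ∈ Finset.univ.filter (fun v : Fin n → ZMod 2 => ∀ i, (v i).val ≤ (u i).val), f v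
/-- Hamming weight of a vector in 𝔽₂ⁿ. -/
def hwt {n : ℕ} (u : Fin n → ZMod 2) : ℕ :=
  (Finset.univ.filter (fun i => u i = 1)).card

/-- Algebraic degree: the maximum Hamming weight of `u` with `μₙ(f)(u) = 1`. -/
def degree {n : ℕ} (f : (Fin n → ZMod 2) → ZMod 2) : ℕ :=
  (Finset.univ.filter (fun u => mobius f u = 1)).sup hwt

/-!
Since the Möbius transform is an involution, `deg μf` is read off `f` itself. Take `u` of maximal
weight `deg f` with `μf(u) = 1`; maximality gives `∑_{v ≽ u} μf(v) = μf(u) = 1`. Expanding `μf`,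
each `w` is counted `#{v : v ≽ u, v ≽ w} = 2^{#zeros of u ∨ w}` times, which is odd exactly when
`u ∨ w = 1`. Hence some `w` with `u ∨ w = 1` has `μ(μf)(w) = f(w) = 1`, and
`n ≤ wt(u) + wt(w) ≤ deg f + deg μf`.
-/

open Finset

lemma card_filter_forall_apply {ι α : Type*} [Fintype ι] [DecidableEq ι] [Fintype α]
    (p : ι → α → Prop) [∀ i, DecidablePred (p i)]
    [DecidablePred fun v : ι → α => ∀ i, p i (v i)] :
    #(univ.filter fun v : ι → α => ∀ i, p i (v i)) = ∏ i, #(univ.filter (p i)) := by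
  rw [← Fintype.card_piFinset]
  congr 1
  ext v
  simp

lemma sum_filter_sum_filter_comm {α β M : Type*} [Fintype α] [Fintype β] [AddCommMonoid M]
    (p : α → Prop) [DecidablePred p] (q : β → α → Prop) [∀ b, DecidablePred (q b)] (f : β → M) :
    ∑ a ∈ univ.filter p, ∑ b ∈ univ.filter (q · a), f b
      = ∑ b, #(univ.filter fun a => p a ∧ q b a) • f b := by
  rw [sum_comm' (t' := univ) (s' := fun b => univ.filter fun a => p a ∧ q b a) (by simp)]
  simp only [sum_const]

section BooleanFunction

variable {n : ℕ}

lemma sum_mobius_filter_forall (f : (Fin n → ZMod 2) → ZMod 2) (p : Fin n → ZMod 2 → Prop)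
    [∀ i, DecidablePred (p i)] :
    ∑ v ∈ univ.filter (fun v => ∀ i, p i (v i)), mobius f v
      = ∑ w, (∏ i, (#(univ.filter fun a => p i a ∧ (w i).val ≤ a.val) : ZMod 2)) * f w := by
  unfold mobius
  rw [sum_filter_sum_filter_comm]
  refine sum_congr rfl fun w _ => ?_
  simp only [← forall_and]
  rw [nsmul_eq_mul, card_filter_forall_apply (fun i a => p i a ∧ (w i).val ≤ a.val), Nat.cast_prod]

lemma mobius_mobius (f : (Fin n → ZMod 2) → ZMod 2) : mobius (mobius f) = f := by
  funext u
  have hcount : ∀ b c : ZMod 2,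
      (#(univ.filter fun a : ZMod 2 => a.val ≤ c.val ∧ b.val ≤ a.val) : ZMod 2)
        = if b = c then 1 else 0 := by decide
  rw [mobius, sum_mobius_filter_forall f fun i a => a.val ≤ (u i).val]
  simp only [hcount, Fintype.prod_boole, ← funext_iff, ite_mul, one_mul, zero_mul, sum_ite_eq']
  simp

lemma sum_mobius_ge (f : (Fin n → ZMod 2) → ZMod 2) (u : Fin n → ZMod 2) :
    ∑ v ∈ univ.filter (fun v => ∀ i, (u i).val ≤ (v i).val), mobius f v
      = ∑ w ∈ univ.filter (fun w => ∀ i, u i = 1 ∨ w i = 1), f w := by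
  have hcount : ∀ b c : ZMod 2,
      (#(univ.filter fun a : ZMod 2 => c.val ≤ a.val ∧ b.val ≤ a.val) : ZMod 2)
        = if c = 1 ∨ b = 1 then 1 else 0 := by decide
  rw [sum_mobius_filter_forall f fun i a => (u i).val ≤ a.val, sum_filter]
  simp only [hcount, Fintype.prod_boole, ite_mul, one_mul, zero_mul]

lemma mobius_ne_zero {f : (Fin n → ZMod 2) → ZMod 2} (hf : f ≠ 0) : mobius f ≠ 0 := by
  intro h
  apply hf
  rw [← mobius_mobius f, h]
  funext u
  simp [mobius]

lemma hwt_eq_sum_val (u : Fin n → ZMod 2) : hwt u = ∑ i, (u i).val := by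
  rw [hwt, card_filter]
  refine sum_congr rfl fun i _ => ?_
  generalize u i = a
  revert a
  decide

lemma hwt_lt_hwt_of_le_of_ne {u v : Fin n → ZMod 2} (huv : ∀ i, (u i).val ≤ (v i).val)
    (hne : u ≠ v) : hwt u < hwt v := by
  obtain ⟨i, hi⟩ := Function.ne_iff.mp hne
  simp only [hwt_eq_sum_val]
  exact sum_lt_sum (fun i _ => huv i)
    ⟨i, mem_univ i, (huv i).lt_of_ne ((ZMod.val_injective 2).ne hi)⟩

lemma le_hwt_add_hwt {u w : Fin n → ZMod 2} (h : ∀ i, u i = 1 ∨ w i = 1) :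
    n ≤ hwt u + hwt w := by
  have hcover : ∀ a b : ZMod 2, a = 1 ∨ b = 1 → 1 ≤ a.val + b.val := by decide
  simp only [hwt_eq_sum_val, ← sum_add_distrib]
  simpa using sum_le_sum fun i (_ : i ∈ univ) => hcover _ _ (h i)

lemma hwt_le_degree {f : (Fin n → ZMod 2) → ZMod 2} {u : Fin n → ZMod 2} (hu : mobius f u = 1) :
    hwt u ≤ degree f :=
  le_sup (mem_filter.mpr ⟨mem_univ u, hu⟩)

lemma exists_hwt_eq_degree {f : (Fin n → ZMod 2) → ZMod 2} (hf : mobius f ≠ 0) :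
    ∃ u, mobius f u = 1 ∧ hwt u = degree f := by
  obtain ⟨u, hu⟩ := Function.ne_iff.mp hf
  have hne : (univ.filter fun u => mobius f u = 1).Nonempty :=
    ⟨u, mem_filter.mpr ⟨mem_univ u, Fin.eq_one_of_ne_zero _ hu⟩⟩
  obtain ⟨u, hmem, hdeg⟩ := exists_mem_eq_sup _ hne hwt
  exact ⟨u, (mem_filter.mp hmem).2, hdeg.symm⟩

lemma sum_mobius_ge_eq_one {f : (Fin n → ZMod 2) → ZMod 2} {u : Fin n → ZMod 2}
    (hu : mobius f u = 1) (hdeg : hwt u = degree f) :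
    ∑ v ∈ univ.filter (fun v => ∀ i, (u i).val ≤ (v i).val), mobius f v = 1 := by
  rw [sum_eq_single_of_mem u (by simp) ?_, hu]
  intro v hv hne
  by_contra hv1
  have := hwt_le_degree (Fin.eq_one_of_ne_zero _ hv1)
  have := hwt_lt_hwt_of_le_of_ne (mem_filter.mp hv).2 (Ne.symm hne)
  omega

end BooleanFunction

theorem stmt5 (n : ℕ) (f : (Fin n → ZMod 2) → ZMod 2) (hf : f ≠ 0) :
    n ≤ degree f + degree (mobius f) := by
  obtain ⟨u, hu, hdeg⟩ := exists_hwt_eq_degree (mobius_ne_zero hf)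
  have hsum : ∑ w ∈ univ.filter (fun w => ∀ i, u i = 1 ∨ w i = 1), f w ≠ 0 := by
    rw [← sum_mobius_ge, sum_mobius_ge_eq_one hu hdeg]
    exact one_ne_zero
  obtain ⟨w, hw, hfw⟩ := exists_ne_zero_of_sum_ne_zero hsum
  have hμμ : mobius (mobius f) w = 1 := by rw [mobius_mobius]; exact Fin.eq_one_of_ne_zero _ hfw
  calc n ≤ hwt u + hwt w := le_hwt_add_hwt (mem_filter.mp hw).2
    _ ≤ degree f + degree (mobius f) := add_le_add hdeg.le (hwt_le_degree hμμ)
end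

section
/- Let n ∈ ℕ and 0 < k < n. Let f₁ be a Boolean function with k variables and f₂ a Boolean function with n−k variables, and identify 𝔽₂ⁿ with 𝔽₂ᵏ × 𝔽₂ⁿ⁻ᵏ. Define f(y,z) = f₁(y)·f₂(z) and g(y,z) = f₁(y) ⊕ f₂(z). Then for all y ∈ 𝔽₂ᵏ and z ∈ 𝔽₂ⁿ⁻ᵏ: μₙ(f)(y,z) = μₖ(f₁)(y)·μₙ₋ₖ(f₂)(z), and μₙ(g)(y,z) = (∏ᵢ(1 ⊕ zᵢ))·μₖ(f₁)(y) ⊕ (∏ᵢ(1 ⊕ yᵢ))·μₙ₋ₖ(f₂)(z). -/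
/-- Möbius transform on 𝔽₂^k × 𝔽₂^m, identified with 𝔽₂^(k+m) with the
componentwise partial order. -/
def mobiusPP {k m : ℕ} (F : ((Fin k → ZMod 2) × (Fin m → ZMod 2)) → ZMod 2) :
    ((Fin k → ZMod 2) × (Fin m → ZMod 2)) → ZMod 2 :=
  fun p => ∑ q ∈ Finset.univ.filter
    (fun q : (Fin k → ZMod 2) × (Fin m → ZMod 2) =>
      (∀ i, (q.1 i).val ≤ (p.1 i).val) ∧ (∀ j, (q.2 j).val ≤ (p.2 j).val)), F q

open Finset

namespace BooleanFunction

variable {k m : ℕ}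

def downset (u : Fin m → ZMod 2) : Finset (Fin m → ZMod 2) :=
  univ.filter fun v => ∀ i, (v i).val ≤ (u i).val

theorem downset_eq_piFinset (u : Fin m → ZMod 2) :
    downset u = Fintype.piFinset fun i => univ.filter fun c : ZMod 2 => c.val ≤ (u i).val := by
  ext v
  simp [downset, Fintype.mem_piFinset]

theorem card_filter_val_le (a : ZMod 2) :
    #(univ.filter fun c : ZMod 2 => c.val ≤ a.val) = 1 + a.val := by
  fin_cases a <;> rfl

theorem card_downset (u : Fin m → ZMod 2) : #(downset u) = ∏ i, (1 + (u i).val) := by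
  simp only [downset_eq_piFinset, Fintype.card_piFinset, card_filter_val_le]

theorem cast_card_downset (u : Fin m → ZMod 2) :
    (#(downset u) : ZMod 2) = ∏ i, (1 + u i) := by
  simp only [card_downset, Nat.cast_prod, Nat.cast_add, Nat.cast_one, ZMod.natCast_val,
    ZMod.cast_id', id]

theorem mobius_apply (f : (Fin m → ZMod 2) → ZMod 2) (u : Fin m → ZMod 2) :
    mobius f u = ∑ v ∈ downset u, f v :=
  rfl

theorem mobiusPP_apply (F : (Fin k → ZMod 2) × (Fin m → ZMod 2) → ZMod 2)
    (y : Fin k → ZMod 2) (z : Fin m → ZMod 2) :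
    mobiusPP F (y, z) = ∑ a ∈ downset y, ∑ b ∈ downset z, F (a, b) := by
  rw [mobiusPP, ← sum_product']
  congr 1
  ext q
  simp [downset, mem_product]

theorem mobiusPP_mul (f₁ : (Fin k → ZMod 2) → ZMod 2) (f₂ : (Fin m → ZMod 2) → ZMod 2)
    (y : Fin k → ZMod 2) (z : Fin m → ZMod 2) :
    mobiusPP (fun p => f₁ p.1 * f₂ p.2) (y, z) = mobius f₁ y * mobius f₂ z := by
  rw [mobiusPP_apply, mobius_apply, mobius_apply, sum_mul_sum]

theorem mobiusPP_add (f₁ : (Fin k → ZMod 2) → ZMod 2) (f₂ : (Fin m → ZMod 2) → ZMod 2)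
    (y : Fin k → ZMod 2) (z : Fin m → ZMod 2) :
    mobiusPP (fun p => f₁ p.1 + f₂ p.2) (y, z) =
      (∏ j, (1 + z j)) * mobius f₁ y + (∏ i, (1 + y i)) * mobius f₂ z := by
  rw [mobiusPP_apply, mobius_apply, mobius_apply, ← cast_card_downset, ← cast_card_downset]
  simp only [sum_add_distrib, sum_const, nsmul_eq_mul, mul_sum]

end BooleanFunction

open BooleanFunction

theorem stmt7_general (n k : ℕ)
    (f1 : (Fin k → ZMod 2) → ZMod 2) (f2 : (Fin (n - k) → ZMod 2) → ZMod 2)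
    (f g : ((Fin k → ZMod 2) × (Fin (n - k) → ZMod 2)) → ZMod 2)
    (hf : ∀ y z, f (y, z) = f1 y * f2 z)
    (hg : ∀ y z, g (y, z) = f1 y + f2 z) :
    ∀ (y : Fin k → ZMod 2) (z : Fin (n - k) → ZMod 2),
      mobiusPP f (y, z) = mobius f1 y * mobius f2 z ∧
      mobiusPP g (y, z) =
        (∏ j, (1 + z j)) * mobius f1 y + (∏ i, (1 + y i)) * mobius f2 z := by
  obtain rfl : f = fun p => f1 p.1 * f2 p.2 := funext fun p => hf p.1 p.2
  obtain rfl : g = fun p => f1 p.1 + f2 p.2 := funext fun p => hg p.1 p.2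
  exact fun y z => ⟨mobiusPP_mul f1 f2 y z, mobiusPP_add f1 f2 y z⟩

theorem stmt7 (n k : ℕ) (hk : 0 < k) (hkn : k < n)
    (f1 : (Fin k → ZMod 2) → ZMod 2) (f2 : (Fin (n - k) → ZMod 2) → ZMod 2)
    (f g : ((Fin k → ZMod 2) × (Fin (n - k) → ZMod 2)) → ZMod 2)
    (hf : ∀ y z, f (y, z) = f1 y * f2 z)
    (hg : ∀ y z, g (y, z) = f1 y + f2 z) :
    ∀ (y : Fin k → ZMod 2) (z : Fin (n - k) → ZMod 2),
      mobiusPP f (y, z) = mobius f1 y * mobius f2 z ∧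
      mobiusPP g (y, z) =
        (∏ j, (1 + z j)) * mobius f1 y + (∏ i, (1 + y i)) * mobius f2 z :=
  stmt7_general n k f1 f2 f g hf hg
end

section
/- For every u ∈ 𝔽₂ⁿ, the Boolean function h_u = x^u ⊕ M_u is coincident, i.e. μₙ(h_u) = h_u, and moreover h_u = ⊕_{v : u ≺ v} x^v = ⊕_{v : u ≺ v} M_v (as Boolean functions of a ∈ 𝔽₂ⁿ). -/
/-- The monomial `x^u`. -/
def monomial {n : ℕ} (u : Fin n → ZMod 2) : (Fin n → ZMod 2) → ZMod 2 :=
  fun a => ∏ i ∈ Finset.univ.filter (fun i => u i = 1), a i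

/-- The minterm `M_u`. -/
def minterm {n : ℕ} (u : Fin n → ZMod 2) : (Fin n → ZMod 2) → ZMod 2 :=
  fun a => if a = u then 1 else 0

open Finset

section

variable {n : ℕ}

lemma monomial_eq_ite (u a : Fin n → ZMod 2) :
    monomial u a = if ∀ i, (u i).val ≤ (a i).val then 1 else 0 := by
  have coord (x y : ZMod 2) : (if x = 1 then y else 1) = if x.val ≤ y.val then 1 else 0 := by
    revert x y; decide
  simp only [monomial, prod_filter, coord, Fintype.prod_boole]
  congr

lemma card_filter_le_le_eq_ite (u a : Fin n → ZMod 2) :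
    (#{v : Fin n → ZMod 2 | ∀ i, (u i).val ≤ (v i).val ∧ (v i).val ≤ (a i).val} : ZMod 2) =
      if a = u then 1 else 0 := by
  have coord (x y : ZMod 2) :
      (#{z : ZMod 2 | x.val ≤ z.val ∧ z.val ≤ y.val} : ZMod 2) = if y = x then 1 else 0 := by
    revert x y; decide
  have hpi : ({v | ∀ i, (u i).val ≤ (v i).val ∧ (v i).val ≤ (a i).val} :
        Finset (Fin n → ZMod 2)) =
      Fintype.piFinset fun i => {z : ZMod 2 | (u i).val ≤ z.val ∧ z.val ≤ (a i).val} := by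
    ext v; simp
  rw [hpi, Fintype.card_piFinset, Nat.cast_prod]
  simp only [coord, Fintype.prod_boole, funext_iff]
  congr

lemma mobius_add (f g : (Fin n → ZMod 2) → ZMod 2) :
    mobius (f + g) = mobius f + mobius g := by
  funext a
  exact sum_add_distrib

lemma mobius_minterm (u : Fin n → ZMod 2) : mobius (minterm u) = monomial u := by
  funext a
  simp [mobius, minterm, monomial_eq_ite]

lemma mobius_monomial (u : Fin n → ZMod 2) : mobius (monomial u) = minterm u := by
  funext a
  simp only [mobius, minterm, monomial_eq_ite, sum_boole, filter_filter, ← forall_and]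
  simp only [and_comm, card_filter_le_le_eq_ite]

lemma sum_monomial_of_le (u a : Fin n → ZMod 2) :
    ∑ v ∈ univ.filter (fun v : Fin n → ZMod 2 => ∀ i, (u i).val ≤ (v i).val), monomial v a =
      minterm u a := by
  simp only [minterm, monomial_eq_ite, sum_boole, filter_filter, ← forall_and,
    card_filter_le_le_eq_ite]

lemma sum_minterm_of_le (u a : Fin n → ZMod 2) :
    ∑ v ∈ univ.filter (fun v : Fin n → ZMod 2 => ∀ i, (u i).val ≤ (v i).val), minterm v a =
      monomial u a := by
  simp [minterm, monomial_eq_ite]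

lemma sum_filter_le_ne (u : Fin n → ZMod 2) (f : (Fin n → ZMod 2) → ZMod 2) :
    ∑ v ∈ univ.filter (fun v : Fin n → ZMod 2 => (∀ i, (u i).val ≤ (v i).val) ∧ u ≠ v), f v =
      ∑ v ∈ univ.filter (fun v : Fin n → ZMod 2 => ∀ i, (u i).val ≤ (v i).val), f v + f u := by
  rw [filter_and, filter_ne, inter_erase, inter_univ,
    sum_erase_eq_sub (by simp), CharTwo.sub_eq_add]

end

theorem stmt8 (n : ℕ) (u : Fin n → ZMod 2) :
    mobius (fun a => monomial u a + minterm u a) = (fun a => monomial u a + minterm u a) ∧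
    (∀ a, monomial u a + minterm u a =
      ∑ v ∈ Finset.univ.filter
        (fun v : Fin n → ZMod 2 => (∀ i, (u i).val ≤ (v i).val) ∧ u ≠ v),
        monomial v a) ∧
    (∀ a, monomial u a + minterm u a =
      ∑ v ∈ Finset.univ.filter
        (fun v : Fin n → ZMod 2 => (∀ i, (u i).val ≤ (v i).val) ∧ u ≠ v),
        minterm v a) := by
  refine ⟨?_, fun a => ?_, fun a => ?_⟩
  · change mobius (monomial u + minterm u) = monomial u + minterm u
    rw [mobius_add, mobius_monomial, mobius_minterm, add_comm]
  · rw [sum_filter_le_ne, sum_monomial_of_le, add_comm]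
  · rw [sum_filter_le_ne, sum_minterm_of_le]
end

section
/- Let h be a coincident Boolean function with n variables with h ≠ 0. Then 2·deg(h) ≥ n, i.e. deg(h) ≥ n/2. -/
/-! Let `a` be a vector of maximal weight `d` in the support of `h`. Because `h = μₙ(h)`, the sum
of `h` over the vectors above the complement of `a` equals the sum of `h` over the vectors above
`a`, which is `h a = 1` by maximality. Hence some `u` above the complement of `a` lies in the
support, so `n - d ≤ wt u ≤ d`; and `d ≤ deg h` since `μₙ(h)(a) = h a = 1`. -/

open Finset

namespace ZMod

lemma eq_zero_or_eq_one_of_two (x : ZMod 2) : x = 0 ∨ x = 1 := by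
  revert x; decide

lemma val_le_val_iff_two {x y : ZMod 2} : x.val ≤ y.val ↔ (x = 1 → y = 1) := by
  revert x y; decide

end ZMod

variable {n : ℕ}

-- The set summed over is a box with `2 ^ #{i | ¬P i}` elements.
lemma sum_const_filter_forall_imp_eq_one (P : Fin n → Prop) [DecidablePred P] (c : ZMod 2) :
    ∑ _u ∈ univ.filter (fun u : Fin n → ZMod 2 => ∀ i, P i → u i = 1), c =
      if ∀ i, P i then c else 0 := by
  have hbox : univ.filter (fun u : Fin n → ZMod 2 => ∀ i, P i → u i = 1) =
      Fintype.piFinset (fun i => if P i then {1} else univ) := by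
    ext u
    simp only [mem_filter, mem_univ, true_and, Fintype.mem_piFinset]
    refine forall_congr' fun i => ?_
    split_ifs <;> simp_all
  have hcard : ∀ i, (((if P i then {1} else univ : Finset (ZMod 2)).card : ℕ) : ZMod 2) =
      if P i then 1 else 0 := fun i => by
    split_ifs <;> rfl
  rw [hbox, sum_const, Fintype.card_piFinset, nsmul_eq_mul, Nat.cast_prod]
  simp only [hcard, Fintype.prod_boole, ite_mul, one_mul, zero_mul]

-- After swapping the sums, `f v` is counted once for each `u` above both `v` and the complement
-- of `a`; there is an odd number of such `u` exactly when `v` lies above `a`.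
lemma sum_mobius_above_compl (f : (Fin n → ZMod 2) → ZMod 2) (a : Fin n → ZMod 2) :
    ∑ u ∈ univ.filter (fun u => ∀ i, a i = 0 → u i = 1), mobius f u =
      ∑ v ∈ univ.filter (fun v => ∀ i, a i = 1 → v i = 1), f v := by
  have hfibre : ∀ v : Fin n → ZMod 2,
      ∑ _u ∈ univ.filter (fun u : Fin n → ZMod 2 => ∀ i, (a i = 0 ∨ v i = 1) → u i = 1),
          f v = if ∀ i, a i = 1 → v i = 1 then f v else 0 := fun v => by
    rw [sum_const_filter_forall_imp_eq_one]
    refine if_congr (forall_congr' fun i => ?_) rfl rfl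
    rcases ZMod.eq_zero_or_eq_one_of_two (a i) with h | h <;> simp [h]
  simp only [mobius, ZMod.val_le_val_iff_two]
  calc _ = ∑ v, ∑ _u ∈ univ.filter (fun u : Fin n → ZMod 2 =>
          ∀ i, (a i = 0 ∨ v i = 1) → u i = 1), f v :=
        sum_comm' fun u v => by
          simp only [mem_filter, mem_univ, true_and, and_true, or_imp, forall_and]
    _ = _ := by rw [sum_filter]; exact sum_congr rfl fun v _ => hfibre v

lemma card_filter_eq_zero_add_hwt (a : Fin n → ZMod 2) :
    (univ.filter fun i => a i = 0).card + hwt a = n := by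
  have hne : ∀ i, ¬a i = 0 ↔ a i = 1 := fun i => by
    rcases ZMod.eq_zero_or_eq_one_of_two (a i) with h | h <;> simp [h]
  rw [hwt, ← filter_congr fun i _ => hne i, card_filter_add_card_filter_not, card_univ,
    Fintype.card_fin]

lemma eq_of_forall_imp_eq_one_of_hwt_le {a v : Fin n → ZMod 2} (hav : ∀ i, a i = 1 → v i = 1)
    (hwt_le : hwt v ≤ hwt a) : v = a := by
  have hsupp : (univ.filter fun i => a i = 1) = univ.filter fun i => v i = 1 :=
    eq_of_subset_of_card_le (fun i => by simpa using hav i) hwt_le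
  funext i
  have hi : a i = 1 ↔ v i = 1 := by simpa using congrArg (i ∈ ·) hsupp
  rcases ZMod.eq_zero_or_eq_one_of_two (a i) with h | h <;>
    rcases ZMod.eq_zero_or_eq_one_of_two (v i) with h' | h' <;> simp_all

lemma sum_above_eq_self_of_hwt_max (f : (Fin n → ZMod 2) → ZMod 2) {a : Fin n → ZMod 2}
    (hmax : ∀ v, f v = 1 → hwt v ≤ hwt a) :
    ∑ v ∈ univ.filter (fun v => ∀ i, a i = 1 → v i = 1), f v = f a := by
  refine sum_eq_single_of_mem a (by simp) fun v hv hva => ?_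
  simp only [mem_filter, mem_univ, true_and] at hv
  rcases ZMod.eq_zero_or_eq_one_of_two (f v) with h0 | h1
  · exact h0
  · exact absurd (eq_of_forall_imp_eq_one_of_hwt_le hv (hmax v h1)) hva

theorem stmt10 (n : ℕ) (h : (Fin n → ZMod 2) → ZMod 2)
    (hcoin : mobius h = h) (hne : h ≠ 0) :
    n ≤ 2 * degree h := by
  have hsupp : (univ.filter fun u => h u = 1).Nonempty := by
    obtain ⟨u, hu⟩ := Function.ne_iff.mp hne
    exact ⟨u, by simpa using (ZMod.eq_zero_or_eq_one_of_two (h u)).resolve_left hu⟩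
  obtain ⟨a, ha, hmax⟩ := exists_max_image _ hwt hsupp
  simp only [mem_filter, mem_univ, true_and] at ha hmax
  have hsum : ∑ u ∈ univ.filter (fun u => ∀ i, a i = 0 → u i = 1), h u = 1 := by
    simpa only [hcoin, sum_above_eq_self_of_hwt_max h hmax, ha] using sum_mobius_above_compl h a
  obtain ⟨u, hu, hu0⟩ := exists_ne_zero_of_sum_ne_zero (hsum ▸ one_ne_zero)
  simp only [mem_filter, mem_univ, true_and] at hu
  have hcompl_le : (univ.filter fun i => a i = 0).card ≤ hwt u :=
    card_le_card fun i => by simpa using hu i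
  have hu_le : hwt u ≤ hwt a := hmax u ((ZMod.eq_zero_or_eq_one_of_two (h u)).resolve_left hu0)
  have ha_le : hwt a ≤ degree h := le_sup (f := hwt) (by simpa [hcoin] using ha)
  have hsplit := card_filter_eq_zero_add_hwt a
  omega
end

section
/- Let n ≥ 1 and let h be a coincident Boolean function with n variables, viewed as a function of (y,b) ∈ 𝔽₂ⁿ⁻¹ × 𝔽₂. Then there exists a unique Boolean function g with n−1 variables such that for all y ∈ 𝔽₂ⁿ⁻¹ and b ∈ 𝔽₂, h(y,b) = (1 ⊕ b)·(g(y) ⊕ μₙ₋₁(g)(y)) ⊕ b·g(y) (equivalently, h(y,0) = g(y) ⊕ μₙ₋₁(g)(y) and h(y,1) = g(y)); moreover h = ĝ ⊕ μₙ(ĝ), where ĝ is the Boolean function with n variables defined by ĝ(y,b) = g(y). -/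
/-- Möbius transform on 𝔽₂^m × 𝔽₂, identified with 𝔽₂^(m+1) with the
componentwise partial order. -/
def mobiusP {m : ℕ} (F : ((Fin m → ZMod 2) × ZMod 2) → ZMod 2) :
    ((Fin m → ZMod 2) × ZMod 2) → ZMod 2 :=
  fun p => ∑ q ∈ Finset.univ.filter
    (fun q : (Fin m → ZMod 2) × ZMod 2 =>
      (∀ i, (q.1 i).val ≤ (p.1 i).val) ∧ (q.2).val ≤ (p.2).val), F q

lemma zmod_two_eq_zero_or_eq_one (b : ZMod 2) : b = 0 ∨ b = 1 := by
  revert b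
  decide

lemma mobiusP_apply {m : ℕ} (F : ((Fin m → ZMod 2) × ZMod 2) → ZMod 2)
    (y : Fin m → ZMod 2) (b : ZMod 2) :
    mobiusP F (y, b) =
      ∑ v ∈ Finset.univ.filter (fun v : Fin m → ZMod 2 => ∀ i, (v i).val ≤ (y i).val),
        ∑ c ∈ Finset.univ.filter (fun c : ZMod 2 => c.val ≤ b.val), F (v, c) := by
  rw [mobiusP, ← Finset.sum_product, ← Finset.filter_product, Finset.univ_product_univ]

lemma mobiusP_apply_zero {m : ℕ} (F : ((Fin m → ZMod 2) × ZMod 2) → ZMod 2)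
    (y : Fin m → ZMod 2) :
    mobiusP F (y, 0) = mobius (fun v => F (v, 0)) y := by
  have hle : Finset.univ.filter (fun c : ZMod 2 => c.val ≤ (0 : ZMod 2).val) = {0} := by decide
  simp only [mobiusP_apply, hle, Finset.sum_singleton, mobius]

lemma mobiusP_apply_one {m : ℕ} (F : ((Fin m → ZMod 2) × ZMod 2) → ZMod 2)
    (y : Fin m → ZMod 2) :
    mobiusP F (y, 1) = mobius (fun v => F (v, 0)) y + mobius (fun v => F (v, 1)) y := by
  have hle : Finset.univ.filter (fun c : ZMod 2 => c.val ≤ (1 : ZMod 2).val) = {0, 1} := by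
    decide
  simp only [mobiusP_apply, hle, Finset.sum_pair zero_ne_one, mobius, Finset.sum_add_distrib]

lemma mobiusP_comp_fst_apply {m : ℕ} (g : (Fin m → ZMod 2) → ZMod 2)
    (y : Fin m → ZMod 2) (b : ZMod 2) :
    mobiusP (fun q => g q.1) (y, b) = (1 + b) * mobius g y := by
  obtain rfl | rfl := zmod_two_eq_zero_or_eq_one b
  · simp [mobiusP_apply_zero]
  · simp [mobiusP_apply_one, CharTwo.add_self_eq_zero]

lemma apply_eq_of_mobiusP_eq_self {m : ℕ} {h : ((Fin m → ZMod 2) × ZMod 2) → ZMod 2}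
    (hcoin : mobiusP h = h) (y : Fin m → ZMod 2) (b : ZMod 2) :
    h (y, b) = h (y, 1) + (1 + b) * mobius (fun v => h (v, 1)) y := by
  have h_zero (y) : h (y, 0) = mobius (fun v => h (v, 0)) y := by
    rw [← mobiusP_apply_zero, hcoin]
  have h_one : h (y, 1) = h (y, 0) + mobius (fun v => h (v, 1)) y := by
    conv_lhs => rw [← hcoin]
    rw [mobiusP_apply_one, ← funext h_zero]
  obtain rfl | rfl := zmod_two_eq_zero_or_eq_one b
  · simp [h_one, add_assoc, CharTwo.add_self_eq_zero]
  · simp [CharTwo.add_self_eq_zero]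

theorem stmt11_general (n : ℕ)
    (h : ((Fin (n - 1) → ZMod 2) × ZMod 2) → ZMod 2)
    (hcoin : mobiusP h = h) :
    ∃! g : (Fin (n - 1) → ZMod 2) → ZMod 2,
      (∀ (y : Fin (n - 1) → ZMod 2) (b : ZMod 2),
        h (y, b) = (1 + b) * (g y + mobius g y) + b * g y) ∧
      (∀ p : (Fin (n - 1) → ZMod 2) × ZMod 2,
        h p = g p.1 + mobiusP (fun q => g q.1) p) := by
  have hb (b : ZMod 2) : (1 + b) + b = 1 := by
    rw [add_assoc, CharTwo.add_self_eq_zero, add_zero]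
  refine ⟨fun y => h (y, 1), ⟨fun y b => ?_, fun ⟨y, b⟩ => ?_⟩, fun g ⟨hg, _⟩ => ?_⟩
  · linear_combination apply_eq_of_mobiusP_eq_self hcoin y b - h (y, 1) * hb b
  · rw [mobiusP_comp_fst_apply (fun y => h (y, 1))]
    exact apply_eq_of_mobiusP_eq_self hcoin y b
  · funext y
    simpa [CharTwo.add_self_eq_zero] using (hg y 1).symm

theorem stmt11 (n : ℕ) (hn : 1 ≤ n)
    (h : ((Fin (n - 1) → ZMod 2) × ZMod 2) → ZMod 2)
    (hcoin : mobiusP h = h) :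
    ∃! g : (Fin (n - 1) → ZMod 2) → ZMod 2,
      (∀ (y : Fin (n - 1) → ZMod 2) (b : ZMod 2),
        h (y, b) = (1 + b) * (g y + mobius g y) + b * g y) ∧
      (∀ p : (Fin (n - 1) → ZMod 2) × ZMod 2,
        h p = g p.1 + mobiusP (fun q => g q.1) p) :=
  stmt11_general n h hcoin
end

section
/- Let n ∈ ℕ and 0 < k < n. Let f₁ be a Boolean function with k variables and f₂ a Boolean function with n−k variables, and identify 𝔽₂ⁿ with 𝔽₂ᵏ × 𝔽₂ⁿ⁻ᵏ; set f(y,z) = f₁(y)·f₂(z). If f₁ and f₂ are coincident then f is coincident; conversely, if f₁ ≠ 0, f₂ ≠ 0 and f is coincident, then both f₁ and f₂ are coincident. -/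
/-! The lower set of `(y, z)` in `𝔽₂ᵏ × 𝔽₂ᵐ` is the product of the lower sets of `y` and `z`,
so the Möbius transform of `f(y, z) = f₁(y) f₂(z)` factors as `μ(f₁)(y) μ(f₂)(z)`. This gives
the first implication at once. For the converse, `1` is the only nonzero element of `𝔽₂`:
if `μ(f₁) ⊗ μ(f₂) = f₁ ⊗ f₂` with `f₁ ≠ 0 ≠ f₂`, evaluating at a point where `f₁ ⊗ f₂ = 1`
forces both Möbius factors to be `1` there, and fixing one coordinate recovers the other factor. -/

theorem mobiusPP_apply_of_mul {k m : ℕ} {f1 : (Fin k → ZMod 2) → ZMod 2}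
    {f2 : (Fin m → ZMod 2) → ZMod 2} {f : ((Fin k → ZMod 2) × (Fin m → ZMod 2)) → ZMod 2}
    (hf : ∀ y z, f (y, z) = f1 y * f2 z) (y : Fin k → ZMod 2) (z : Fin m → ZMod 2) :
    mobiusPP f (y, z) = mobius f1 y * mobius f2 z := by
  rw [mobiusPP, mobius, mobius, Finset.sum_mul_sum, ← Finset.sum_product']
  refine Finset.sum_congr ?_ fun q _ => hf q.1 q.2
  ext q
  simp

theorem ZMod.eq_one_of_ne_zero_two {a : ZMod 2} (ha : a ≠ 0) : a = 1 := by
  revert a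
  decide

theorem eq_and_eq_of_forall_mul_eq_mul {α β : Type*} {f1 g1 : α → ZMod 2} {f2 g2 : β → ZMod 2}
    (hf1 : f1 ≠ 0) (hf2 : f2 ≠ 0) (h : ∀ y z, g1 y * g2 z = f1 y * f2 z) :
    g1 = f1 ∧ g2 = f2 := by
  obtain ⟨y0, hy0⟩ := Function.ne_iff.mp hf1
  obtain ⟨z0, hz0⟩ := Function.ne_iff.mp hf2
  have hg : g1 y0 * g2 z0 ≠ 0 := h y0 z0 ▸ mul_ne_zero hy0 hz0
  have hg1 := ZMod.eq_one_of_ne_zero_two (left_ne_zero_of_mul hg)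
  have hg2 := ZMod.eq_one_of_ne_zero_two (right_ne_zero_of_mul hg)
  constructor
  · funext y
    simpa [hg2, ZMod.eq_one_of_ne_zero_two hz0] using h y z0
  · funext z
    simpa [hg1, ZMod.eq_one_of_ne_zero_two hy0] using h y0 z

theorem stmt14_general (n k : ℕ)
    (f1 : (Fin k → ZMod 2) → ZMod 2) (f2 : (Fin (n - k) → ZMod 2) → ZMod 2)
    (f : ((Fin k → ZMod 2) × (Fin (n - k) → ZMod 2)) → ZMod 2)
    (hf : ∀ y z, f (y, z) = f1 y * f2 z) :
    (mobius f1 = f1 → mobius f2 = f2 → mobiusPP f = f) ∧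
    (f1 ≠ 0 → f2 ≠ 0 → mobiusPP f = f → mobius f1 = f1 ∧ mobius f2 = f2) := by
  have hprod := mobiusPP_apply_of_mul hf
  refine ⟨fun h1 h2 => ?_, fun hf1 hf2 hF => ?_⟩
  · funext ⟨y, z⟩
    rw [hprod, h1, h2, hf]
  · exact eq_and_eq_of_forall_mul_eq_mul hf1 hf2 fun y z => by rw [← hprod, hF, hf]

theorem stmt14 (n k : ℕ) (hk : 0 < k) (hkn : k < n)
    (f1 : (Fin k → ZMod 2) → ZMod 2) (f2 : (Fin (n - k) → ZMod 2) → ZMod 2)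
    (f : ((Fin k → ZMod 2) × (Fin (n - k) → ZMod 2)) → ZMod 2)
    (hf : ∀ y z, f (y, z) = f1 y * f2 z) :
    (mobius f1 = f1 → mobius f2 = f2 → mobiusPP f = f) ∧
    (f1 ≠ 0 → f2 ≠ 0 → mobiusPP f = f → mobius f1 = f1 ∧ mobius f2 = f2) :=
  stmt14_general n k f1 f2 f hf
end

section
/- Let n ≥ 1. The number of Boolean functions f with n variables that are both coincident and symmetric equals 2^{⌊n/2⌋ + 1}. -/
open Finset

namespace Nat

theorem cast_choose_zmod_two (a b : ℕ) :
    (a.choose b : ZMod 2) = ((a % 2).choose (b % 2) * (a / 2).choose (b / 2) : ℕ) := by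
  have : Fact (Nat.Prime 2) := ⟨Nat.prime_two⟩
  exact (ZMod.natCast_eq_natCast_iff _ _ _).mpr Choose.choose_modEq_choose_mod_mul_choose_div_nat

@[simp] theorem cast_choose_two_mul_two_mul (m j : ℕ) :
    ((2 * m).choose (2 * j) : ZMod 2) = m.choose j := by
  rw [cast_choose_zmod_two]; simp

@[simp] theorem cast_choose_two_mul_two_mul_add_one (m j : ℕ) :
    ((2 * m).choose (2 * j + 1) : ZMod 2) = 0 := by
  rw [cast_choose_zmod_two]; simp

@[simp] theorem cast_choose_two_mul_add_one_two_mul (m j : ℕ) :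
    ((2 * m + 1).choose (2 * j) : ZMod 2) = m.choose j := by
  rw [cast_choose_zmod_two]; simp [Nat.mul_add_div]

@[simp] theorem cast_choose_two_mul_add_one_two_mul_add_one (m j : ℕ) :
    ((2 * m + 1).choose (2 * j + 1) : ZMod 2) = m.choose j := by
  rw [cast_choose_zmod_two]; simp [Nat.mul_add_div]

theorem sum_range_choose_succ_add_two (e : ℕ) :
    ∑ t ∈ range e, (e + 1).choose (t + 1) + 2 = 2 ^ (e + 1) := by
  rw [← Nat.sum_range_choose, sum_range_succ', sum_range_succ, choose_self, choose_zero_right]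

theorem sum_Ico_choose_mul_choose_zmod_two {i m : ℕ} (him : i < m) :
    ∑ j ∈ Ico (i + 1) m, (m.choose j * j.choose i : ZMod 2) = 0 := by
  obtain ⟨e, rfl⟩ : ∃ e, m = i + 1 + e := ⟨m - (i + 1), by omega⟩
  have hchoose : ∀ t, ((i + 1 + e).choose (i + 1 + t) * (i + 1 + t).choose i : ZMod 2) =
      (i + 1 + e).choose i * (e + 1).choose (t + 1) := by
    intro t
    rw [← Nat.cast_mul, ← Nat.cast_mul, Nat.choose_mul (by omega)]
    congr 4 <;> omega
  have heven : ((∑ t ∈ range e, (e + 1).choose (t + 1) : ℕ) : ZMod 2) = 0 := by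
    have := congrArg (Nat.cast : ℕ → ZMod 2) (sum_range_choose_succ_add_two e)
    simpa [pow_succ, CharTwo.two_eq_zero] using this
  rw [sum_Ico_eq_sum_range, Nat.add_sub_cancel_left]
  simp only [hchoose, ← mul_sum]
  rw [← Nat.cast_sum, heven, mul_zero]

end Nat

theorem Finset.sum_range_two_mul {M : Type*} [AddCommMonoid M] (m : ℕ) (f : ℕ → M) :
    ∑ k ∈ range (2 * m), f k = ∑ j ∈ range m, (f (2 * j) + f (2 * j + 1)) := by
  induction m with
  | zero => simp
  | succ m ih => rw [Nat.mul_succ, sum_range_succ, sum_range_succ, sum_range_succ, ← ih, add_assoc]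

def binomSumBelow (h : ℕ → ZMod 2) (w : ℕ) : ZMod 2 :=
  ∑ k ∈ range w, (w.choose k : ZMod 2) * h k

theorem binomSumBelow_congr {h h' : ℕ → ZMod 2} {w : ℕ} (hh : ∀ k < w, h k = h' k) :
    binomSumBelow h w = binomSumBelow h' w :=
  sum_congr rfl fun k hk => by rw [hh k (mem_range.mp hk)]

theorem binomSumBelow_two_mul (h : ℕ → ZMod 2) (m : ℕ) :
    binomSumBelow h (2 * m) = binomSumBelow (fun j => h (2 * j)) m := by
  simp [binomSumBelow, sum_range_two_mul]

theorem binomSumBelow_two_mul_add_one (h : ℕ → ZMod 2) (m : ℕ) :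
    binomSumBelow h (2 * m + 1) =
      binomSumBelow (fun j => h (2 * j) + h (2 * j + 1)) m + h (2 * m) := by
  simp [binomSumBelow, sum_range_succ, sum_range_two_mul, mul_add, CharTwo.two_eq_zero]

/-- Over `𝔽₂` the binomial transform `h ↦ (w ↦ ∑_{k ≤ w} C(w,k) h k)` is an involution; since
`binomSumBelow` is this transform plus the identity, it squares to zero. -/
theorem binomSumBelow_binomSumBelow (c : ℕ → ZMod 2) (m : ℕ) :
    binomSumBelow (binomSumBelow c) m = 0 := by
  simp only [binomSumBelow, mul_sum]
  rw [sum_comm' (t' := range m) (s' := fun i => Ico (i + 1) m) (by intros; simp; omega)]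
  refine sum_eq_zero fun i hi => ?_
  simp only [← mul_assoc, ← sum_mul]
  rw [Nat.sum_Ico_choose_mul_choose_zmod_two (mem_range.mp hi), zero_mul]

theorem binomSumBelow_two_mul_eq_zero {h : ℕ → ZMod 2} {m : ℕ}
    (hodd : ∀ j < m, binomSumBelow h (2 * j + 1) = 0) : binomSumBelow h (2 * m) = 0 := by
  rw [binomSumBelow_two_mul, ← binomSumBelow_binomSumBelow (fun j => h (2 * j) + h (2 * j + 1)) m]
  refine binomSumBelow_congr fun j hj => ?_
  have := hodd j hj
  rw [binomSumBelow_two_mul_add_one, add_eq_zero_iff_eq_neg, ZMod.neg_eq_self_mod_two] at this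
  exact this.symm

theorem Finset.card_filter_piFin_succ {α : Type*} [Fintype α] {m : ℕ}
    (P : (Fin (m + 1) → α) → Prop) [DecidablePred P] :
    #{g | P g} = ∑ g : Fin m → α, #{x | P (Fin.snoc g x)} := by
  simp only [card_filter]
  rw [← (Fin.snocEquiv fun _ => α).sum_comp, Fintype.sum_prod_type, sum_comm]
  rfl

theorem Finset.card_eq_mul_of_card_snoc_fiber {α : Type*} [Fintype α] [DecidableEq α] {m c : ℕ}
    {s : Finset (Fin (m + 1) → α)} {t : Finset (Fin m → α)}
    (hfiber : ∀ g, #{x | Fin.snoc g x ∈ s} = if g ∈ t then c else 0) :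
    #s = c * #t := by
  rw [← filter_univ_mem s, card_filter_piFin_succ, ← filter_univ_mem t, card_filter, mul_sum]
  simp [hfiber]

def extendByZero {α : Type*} [Zero α] {m : ℕ} (g : Fin m → α) (k : ℕ) : α :=
  if hk : k < m then g ⟨k, hk⟩ else 0

section extendByZero

variable {α : Type*} [Zero α] {m : ℕ} (g : Fin m → α) (x : α)

theorem extendByZero_snoc_of_lt {k : ℕ} (hk : k < m) :
    extendByZero (Fin.snoc g x : Fin (m + 1) → α) k = extendByZero g k := by
  simp only [extendByZero, hk, Nat.lt_succ_of_lt hk, dite_true]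
  exact Fin.snoc_castSucc (α := fun _ => α) x g ⟨k, hk⟩

theorem extendByZero_snoc_self : extendByZero (Fin.snoc g x : Fin (m + 1) → α) m = x := by
  rw [extendByZero, dif_pos m.lt_succ_self]
  exact Fin.snoc_last (α := fun _ => α) x g

end extendByZero

theorem binomSumBelow_extendByZero_snoc {m : ℕ} (g : Fin (2 * m) → ZMod 2) (x : ZMod 2) :
    binomSumBelow (extendByZero (Fin.snoc g x : Fin (2 * m + 1) → ZMod 2)) (2 * m + 1) =
      binomSumBelow (fun j => extendByZero g (2 * j) + extendByZero g (2 * j + 1)) m + x := by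
  rw [binomSumBelow_two_mul_add_one, extendByZero_snoc_self]
  congr 1
  refine binomSumBelow_congr fun j hj => ?_
  rw [extendByZero_snoc_of_lt _ _ (by omega), extendByZero_snoc_of_lt _ _ (by omega)]

/-- For `m = n + 1` and `k = n`, the value vectors of the coincident symmetric functions of `n`
variables (`filter_mobius_eq_self_and_symmetric`). -/
def coincidentValueVectors (m k : ℕ) : Finset (Fin m → ZMod 2) :=
  {g | ∀ w ≤ k, binomSumBelow (extendByZero g) w = 0}

@[simp] theorem mem_coincidentValueVectors {m k : ℕ} {g : Fin m → ZMod 2} :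
    g ∈ coincidentValueVectors m k ↔ ∀ w ≤ k, binomSumBelow (extendByZero g) w = 0 := by
  simp [coincidentValueVectors]

namespace coincidentValueVectors

variable {m k : ℕ}

theorem mem_succ_right {g : Fin m → ZMod 2} :
    g ∈ coincidentValueVectors m (k + 1) ↔
      g ∈ coincidentValueVectors m k ∧ binomSumBelow (extendByZero g) (k + 1) = 0 := by
  simp [Nat.le_succ_iff, or_imp, forall_and]

theorem mem_two_mul_add_two {g : Fin m → ZMod 2} {n : ℕ} :
    g ∈ coincidentValueVectors m (2 * n + 2) ↔ g ∈ coincidentValueVectors m (2 * n + 1) :=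
  mem_succ_right.trans <| and_iff_left_of_imp fun hg =>
    binomSumBelow_two_mul_eq_zero (m := n + 1) fun _ _ =>
      mem_coincidentValueVectors.mp hg _ (by omega)

theorem snoc_mem_iff (hk : k ≤ m) (g : Fin m → ZMod 2) (x : ZMod 2) :
    Fin.snoc g x ∈ coincidentValueVectors (m + 1) k ↔ g ∈ coincidentValueVectors m k := by
  simp only [mem_coincidentValueVectors]
  refine forall₂_congr fun w hw => ?_
  rw [binomSumBelow_congr fun i hi => extendByZero_snoc_of_lt g x (by omega)]

theorem card_succ_left (hk : k ≤ m) :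
    #(coincidentValueVectors (m + 1) k) = 2 * #(coincidentValueVectors m k) := by
  refine card_eq_mul_of_card_snoc_fiber fun g => ?_
  split_ifs with hg <;> simp [snoc_mem_iff hk, hg]

theorem card_two_mul_add_one_self (n : ℕ) :
    #(coincidentValueVectors (2 * n + 1) (2 * n + 1)) =
      #(coincidentValueVectors (2 * n) (2 * n)) := by
  rw [← one_mul #(coincidentValueVectors (2 * n) (2 * n))]
  -- the condition at the odd weight `2 * n + 1` determines the new last coordinate `x`
  refine card_eq_mul_of_card_snoc_fiber fun g => ?_
  simp only [mem_succ_right, snoc_mem_iff le_rfl, binomSumBelow_extendByZero_snoc,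
    add_eq_zero_iff_eq_neg', ZMod.neg_eq_self_mod_two]
  split_ifs with hg <;> simp [hg, filter_eq']

theorem card_self (m : ℕ) : #(coincidentValueVectors m m) = 2 ^ (m / 2) := by
  induction m with
  | zero => rfl
  | succ m ih =>
    obtain ⟨n, rfl | rfl⟩ := Nat.even_or_odd' m
    · rw [card_two_mul_add_one_self, ih]
      congr 1
      omega
    · have : coincidentValueVectors (2 * n + 1 + 1) (2 * n + 1 + 1) =
          coincidentValueVectors (2 * n + 1 + 1) (2 * n + 1) :=
        Finset.ext fun _ => mem_two_mul_add_two
      rw [this, card_succ_left le_rfl, ih, ← pow_succ']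
      congr 1
      omega

end coincidentValueVectors

theorem hammingNorm_comp_perm {ι β : Type*} [Fintype ι] [Zero β] [DecidableEq β]
    (u : ι → β) (σ : Equiv.Perm ι) : hammingNorm (u ∘ σ) = hammingNorm u :=
  card_equiv σ (by simp)

section F2Vectors

variable {ι : Type*} [Fintype ι] [DecidableEq ι]

def supportEquiv : (ι → ZMod 2) ≃ Finset ι where
  toFun u := {i | u i ≠ 0}
  invFun s i := if i ∈ s then 1 else 0
  left_inv u := funext fun i => by
    have : ∀ a : ZMod 2, (if a ≠ 0 then 1 else 0) = a := by decide
    simpa using this (u i)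
  right_inv s := by ext i; by_cases hi : i ∈ s <;> simp [hi]

theorem hammingNorm_eq_card_supportEquiv (u : ι → ZMod 2) :
    hammingNorm u = #(supportEquiv u) := rfl

theorem supportEquiv_subset_iff {u v : ι → ZMod 2} :
    supportEquiv v ⊆ supportEquiv u ↔ ∀ i, (v i).val ≤ (u i).val := by
  have : ∀ a b : ZMod 2, a.val ≤ b.val ↔ (a ≠ 0 → b ≠ 0) := by decide
  simp [supportEquiv, subset_iff, this]

theorem exists_hammingNorm_eq {k : ℕ} (hk : k ≤ Fintype.card ι) :
    ∃ u : ι → ZMod 2, hammingNorm u = k := by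
  obtain ⟨s, -, hs⟩ := exists_subset_card_eq (s := (univ : Finset ι)) hk
  exact ⟨supportEquiv.symm s, by rw [hammingNorm_eq_card_supportEquiv, Equiv.apply_symm_apply, hs]⟩

theorem exists_perm_comp_eq_of_hammingNorm_eq {u v : ι → ZMod 2}
    (huv : hammingNorm u = hammingNorm v) : ∃ σ : Equiv.Perm ι, u ∘ σ = v := by
  obtain ⟨σ, hσ⟩ := Equiv.Perm.exists_map_finset_eq (supportEquiv v) (supportEquiv u) huv.symm
  refine ⟨σ, supportEquiv.injective <| Finset.ext fun i => ?_⟩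
  calc i ∈ supportEquiv (u ∘ σ) ↔ σ i ∈ supportEquiv u := by simp [supportEquiv]
    _ ↔ i ∈ supportEquiv v := by rw [← hσ, mem_map_equiv, Equiv.symm_apply_apply]

theorem exists_eq_comp_hammingNorm {β : Type*} {f : (ι → ZMod 2) → β}
    (hf : ∀ (σ : Equiv.Perm ι) (a : ι → ZMod 2), f (a ∘ σ) = f a) :
    ∃ h : ℕ → β, f = h ∘ hammingNorm := by
  have hfactor : Function.FactorsThrough f hammingNorm := fun a b hab => by
    obtain ⟨σ, rfl⟩ := exists_perm_comp_eq_of_hammingNorm_eq hab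
    exact (hf σ a).symm
  exact ⟨Function.extend hammingNorm f fun _ => f 0,
    funext fun a => (hfactor.extend_apply _ a).symm⟩

end F2Vectors

theorem hammingNorm_le {n : ℕ} (u : Fin n → ZMod 2) : hammingNorm u ≤ n :=
  hammingNorm_le_card_fintype.trans_eq (Fintype.card_fin n)

theorem mobius_comp_hammingNorm {n : ℕ} (h : ℕ → ZMod 2) (u : Fin n → ZMod 2) :
    mobius (h ∘ hammingNorm) u = binomSumBelow h (hammingNorm u) + h (hammingNorm u) := by
  have : mobius (h ∘ hammingNorm) u = ∑ s ∈ (supportEquiv u).powerset, h #s :=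
    sum_equiv supportEquiv (by simp [supportEquiv_subset_iff]) fun _ _ => rfl
  rw [this, sum_powerset_apply_card, hammingNorm_eq_card_supportEquiv, sum_range_succ]
  simp [binomSumBelow]

theorem mobius_comp_hammingNorm_eq_self_iff {n : ℕ} (h : ℕ → ZMod 2) :
    mobius (h ∘ hammingNorm : (Fin n → ZMod 2) → ZMod 2) = h ∘ hammingNorm ↔
      ∀ w ≤ n, binomSumBelow h w = 0 := by
  simp only [funext_iff, mobius_comp_hammingNorm, Function.comp_apply, add_eq_right]
  constructor
  · intro hh w hw
    obtain ⟨u, rfl⟩ := exists_hammingNorm_eq (ι := Fin n) (by simpa using hw)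
    exact hh u
  · exact fun hh u => hh _ (hammingNorm_le u)

theorem extendByZero_comp_hammingNorm_injective (n : ℕ) :
    Function.Injective fun g : Fin (n + 1) → ZMod 2 =>
      extendByZero g ∘ (hammingNorm : (Fin n → ZMod 2) → ℕ) := by
  intro g g' hgg'
  funext k
  obtain ⟨u, hu⟩ := exists_hammingNorm_eq (ι := Fin n) (k := k) (by simpa using k.is_le)
  simpa [extendByZero, hu, Fin.is_le] using congrFun hgg' u

theorem filter_mobius_eq_self_and_symmetric (n : ℕ) :
    univ.filter (fun f : (Fin n → ZMod 2) → ZMod 2 =>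
        mobius f = f ∧ ∀ (σ : Equiv.Perm (Fin n)) (a : Fin n → ZMod 2), f (a ∘ σ) = f a) =
      (coincidentValueVectors (n + 1) n).map
        ⟨fun g => extendByZero g ∘ hammingNorm, extendByZero_comp_hammingNorm_injective n⟩ := by
  ext f
  simp only [mem_filter, mem_univ, true_and, mem_map, Function.Embedding.coeFn_mk,
    mem_coincidentValueVectors]
  constructor
  · rintro ⟨hmob, hsym⟩
    obtain ⟨h, rfl⟩ := exists_eq_comp_hammingNorm hsym
    have hg : extendByZero (fun k : Fin (n + 1) => h k) ∘ hammingNorm =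
        h ∘ (hammingNorm : (Fin n → ZMod 2) → ℕ) :=
      funext fun u => dif_pos (Nat.lt_succ_of_le (hammingNorm_le u))
    rw [← hg] at hmob ⊢
    exact ⟨_, (mobius_comp_hammingNorm_eq_self_iff _).mp hmob, rfl⟩
  · rintro ⟨g, hg, rfl⟩
    exact ⟨(mobius_comp_hammingNorm_eq_self_iff _).mpr hg, fun σ a => by
      simp [hammingNorm_comp_perm]⟩

theorem stmt19_general (n : ℕ) :
    (Finset.univ.filter
      (fun f : (Fin n → ZMod 2) → ZMod 2 =>
        mobius f = f ∧
        ∀ (σ : Equiv.Perm (Fin n)) (a : Fin n → ZMod 2), f (a ∘ σ) = f a)).card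
      = 2 ^ (n / 2 + 1) := by
  rw [filter_mobius_eq_self_and_symmetric, card_map,
    coincidentValueVectors.card_succ_left le_rfl, coincidentValueVectors.card_self, pow_succ']

theorem stmt19 (n : ℕ) (hn : 1 ≤ n) :
    (Finset.univ.filter
      (fun f : (Fin n → ZMod 2) → ZMod 2 =>
        mobius f = f ∧
        ∀ (σ : Equiv.Perm (Fin n)) (a : Fin n → ZMod 2), f (a ∘ σ) = f a)).card
      = 2 ^ (n / 2 + 1) :=
  stmt19_general n
end
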